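/- Let G be a P5-free graph with a blockade (A_1, …, A_ℓ) and a graph J on vertex set [ℓ] such that for all i < j: if ij ∉ E(J) then A_j is anticomplete to A_i, and if ij ∈ E(J) then A_j is (ε,χ)-dense to A_i with ε ≤ 1/4. Suppose moreover every block A_i is nonempty. Then J is P5-free. -/

import Mathlib

/-!
Choose the vertices of an induced copy of a small graph `H` in `J` greedily, from the highest
block index down. A vertex placed in block `A i` must be adjacent to the already placed vertices
of its `J`-neighbours `j > i`; density says each of them misses only a part of `A i` of
chromatic number `< χ(A i) / n`, and fewer than `n + 1` such parts cannot cover `A i`.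
Non-edges of `J` are anticomplete, so the chosen vertices induce `H` in `G`.
-/

open SimpleGraph

/-- The chromatic number of the subgraph of `G` induced on `S`, as a natural number. -/
noncomputable def chiS {V : Type*} [Fintype V] (G : SimpleGraph V) (S : Set V) : ℕ :=
  (G.induce S).chromaticNumber.toNat

/-- A graph is `P5`-free if it has no induced subgraph isomorphic to the five-vertex path. -/
def P5Free {V : Type*} (G : SimpleGraph V) : Prop :=
  IsEmpty (SimpleGraph.pathGraph 5 ↪g G)

open Finset

section ChiS

variable {V : Type*} [Fintype V] (G : SimpleGraph V)

lemma colorable_chiS (S : Set V) : (G.induce S).Colorable (chiS G S) :=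
  (G.induce S).colorable_chromaticNumber_of_fintype

lemma chiS_le_of_colorable {S : Set V} {n : ℕ} (h : (G.induce S).Colorable n) :
    chiS G S ≤ n :=
  ENat.toNat_le_of_le_natCast h.chromaticNumber_le

lemma chiS_le_card_mul_of_subset_biUnion {ι : Type*} {T : Finset ι} {E : ι → Set V}
    {S : Set V} {m : ℕ} (hS : S ⊆ ⋃ q ∈ T, E q) (hE : ∀ q ∈ T, chiS G (E q) ≤ m) :
    chiS G S ≤ #T * m := by
  classical
  have hc : ∀ q ∈ T, ∃ c : V → ℕ, (∀ x ∈ E q, c x < m) ∧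
      ∀ x ∈ E q, ∀ y ∈ E q, G.Adj x y → c x ≠ c y := by
    intro q hq
    obtain ⟨C, hC⟩ := (colorable_iff_exists_bdd_nat_coloring m).mp
      ((colorable_chiS G (E q)).mono (hE q hq))
    refine ⟨fun x => if h : x ∈ E q then C ⟨x, h⟩ else 0, fun x hx => ?_,
      fun x hx y hy hxy => ?_⟩
    · simpa [hx] using hC ⟨x, hx⟩
    · simpa [hx, hy] using C.valid (show (G.induce (E q)).Adj ⟨x, hx⟩ ⟨y, hy⟩ from hxy)
  choose! c hcm hcG using hc
  have hcover : ∀ x : S, ∃ q, q ∈ T ∧ (x : V) ∈ E q := fun x => by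
    simpa using hS x.2
  choose Q hQT hQE using hcover
  let C : (G.induce S).Coloring (T × Fin m) := Coloring.mk
    (fun x => (⟨Q x, hQT x⟩, ⟨c (Q x) x, hcm _ (hQT x) _ (hQE x)⟩))
    (fun {x y} hxy hcol => by
      obtain ⟨hQ, hcol⟩ := Prod.ext_iff.mp hcol
      replace hQ : Q x = Q y := congrArg Subtype.val hQ
      replace hcol : c (Q x) x = c (Q y) y := Fin.val_eq_of_eq hcol
      rw [← hQ] at hcol
      exact hcG _ (hQT x) x (hQE x) y (hQ ▸ hQE y) hxy hcol)
  simpa using chiS_le_of_colorable G C.colorable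

lemma exists_mem_forall_notMem_of_mul_chiS_lt {ι : Type*} {T : Finset ι} {E : ι → Set V}
    {S : Set V} {n : ℕ} (hS : S.Nonempty) (hT : #T ≤ n)
    (hE : ∀ q ∈ T, n * chiS G (E q) < chiS G S) :
    ∃ x ∈ S, ∀ q ∈ T, x ∉ E q := by
  by_contra! hcover
  have hST : S ⊆ ⋃ q ∈ T, E q := fun x hx => by simpa using hcover x hx
  rcases T.eq_empty_or_nonempty with rfl | hT₀
  · simpa using hST hS.some_mem
  obtain ⟨q, hq, hmax⟩ := T.exists_max_image (fun q => chiS G (E q)) hT₀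
  have hχ := chiS_le_card_mul_of_subset_biUnion G hST hmax
  have := hE q hq
  have := Nat.mul_le_mul_right (chiS G (E q)) hT
  omega

end ChiS

section Blockade

variable {V : Type*} {G : SimpleGraph V} {ℓ : ℕ} {A : Fin ℓ → Set V} {J : SimpleGraph (Fin ℓ)}

theorem exists_transversal_adj_of_card_le [Fintype V] (hne : ∀ i, (A i).Nonempty) {n : ℕ}
    (hdense : ∀ i j : Fin ℓ, i < j → J.Adj i j →
      ∀ v ∈ A j, n * chiS G (A i \ G.neighborSet v) < chiS G (A i))
    (I : Finset (Fin ℓ)) (hI : #I ≤ n + 1) :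
    ∃ v : Fin ℓ → V, (∀ i ∈ I, v i ∈ A i) ∧
      ∀ i ∈ I, ∀ j ∈ I, i < j → J.Adj i j → G.Adj (v i) (v j) := by
  classical
  induction I using Finset.induction_on_min with
  | empty => exact ⟨fun i => (hne i).some, by simp, by simp⟩
  | insert a s has ih =>
    have ha : a ∉ s := fun h => lt_irrefl a (has a h)
    rw [card_insert_of_notMem ha] at hI
    obtain ⟨v, hvA, hvG⟩ := ih (by omega)
    obtain ⟨w, hwA, hw⟩ := exists_mem_forall_notMem_of_mul_chiS_lt G (hne a)
      (T := s.filter (J.Adj a)) (E := fun j => A a \ G.neighborSet (v j))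
      ((card_filter_le _ _).trans (by omega))
      (fun j hj => hdense a j (has j (mem_filter.1 hj).1) (mem_filter.1 hj).2 (v j)
        (hvA j (mem_filter.1 hj).1))
    have hupd : ∀ j ∈ s, Function.update v a w j = v j := fun j hj =>
      Function.update_of_ne (ne_of_mem_of_not_mem hj ha) _ _
    refine ⟨Function.update v a w, fun i hi => ?_, fun i hi j hj hij hJ => ?_⟩
    · rcases mem_insert.1 hi with rfl | hi
      · simpa using hwA
      · simpa [hupd i hi] using hvA i hi
    rcases mem_insert.1 hi with rfl | hi'
    · rcases mem_insert.1 hj with rfl | hj'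
      · exact absurd hij (lt_irrefl _)
      have hwN : w ∈ G.neighborSet (v j) := by
        by_contra hwN
        exact hw j (mem_filter.2 ⟨hj', hJ⟩) ⟨hwA, hwN⟩
      simpa [hupd j hj'] using (G.mem_neighborSet _ _).1 hwN |>.symm
    · rcases mem_insert.1 hj with rfl | hj'
      · exact absurd (has i hi') (lt_asymm hij)
      simpa [hupd i hi', hupd j hj'] using hvG i hi' j hj' hij hJ

theorem transversal_adj_iff {v : Fin ℓ → V}
    (hanti : ∀ i j : Fin ℓ, i < j → ¬ J.Adj i j → ∀ a ∈ A i, ∀ b ∈ A j, ¬ G.Adj a b)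
    {I : Finset (Fin ℓ)} (hvA : ∀ i ∈ I, v i ∈ A i)
    (hvG : ∀ i ∈ I, ∀ j ∈ I, i < j → J.Adj i j → G.Adj (v i) (v j))
    {i j : Fin ℓ} (hi : i ∈ I) (hj : j ∈ I) :
    G.Adj (v i) (v j) ↔ J.Adj i j := by
  constructor
  · intro hG
    by_contra hJ
    rcases lt_trichotomy i j with hij | rfl | hji
    · exact hanti i j hij hJ _ (hvA i hi) _ (hvA j hj) hG
    · exact G.irrefl hG
    · exact hanti j i hji (fun h => hJ h.symm) _ (hvA j hj) _ (hvA i hi) hG.symm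
  · intro hJ
    rcases lt_trichotomy i j with hij | rfl | hji
    · exact hvG i hi j hj hij hJ
    · exact (J.irrefl hJ).elim
    · exact (hvG j hj i hi hji hJ.symm).symm

theorem nonempty_embedding_of_blockade [Fintype V] {W : Type*} [Fintype W] {H : SimpleGraph W}
    {n : ℕ} (hW : Fintype.card W ≤ n + 1) (hne : ∀ i, (A i).Nonempty)
    (hdisj : ∀ i j, i ≠ j → Disjoint (A i) (A j))
    (hanti : ∀ i j : Fin ℓ, i < j → ¬ J.Adj i j → ∀ a ∈ A i, ∀ b ∈ A j, ¬ G.Adj a b)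
    (hdense : ∀ i j : Fin ℓ, i < j → J.Adj i j →
      ∀ v ∈ A j, n * chiS G (A i \ G.neighborSet v) < chiS G (A i))
    (f : H ↪g J) : Nonempty (H ↪g G) := by
  obtain ⟨v, hvA, hvG⟩ := exists_transversal_adj_of_card_le hne hdense (univ.map f.toEmbedding)
    (by simpa using hW)
  have hmem : ∀ x, f x ∈ univ.map f.toEmbedding := fun x => by simp
  have hinj : Function.Injective (v ∘ f) := fun x y hxy => by
    by_contra hne'
    replace hxy : v (f x) = v (f y) := hxy
    exact Set.disjoint_left.mp (hdisj _ _ (f.injective.ne hne')) (hvA _ (hmem x))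
      (hxy ▸ hvA _ (hmem y))
  exact ⟨⟨⟨v ∘ f, hinj⟩, fun {x y} =>
    (transversal_adj_iff hanti hvA hvG (hmem x) (hmem y)).trans f.map_adj_iff⟩⟩

end Blockade

theorem stmt_16 {V : Type*} [Fintype V] (G : SimpleGraph V) (hP5 : P5Free G)
    (ℓ : ℕ) (A : Fin ℓ → Set V)
    (hne : ∀ i, (A i).Nonempty)
    (hdisj : ∀ i j, i ≠ j → Disjoint (A i) (A j))
    (J : SimpleGraph (Fin ℓ))
    (ε : ℝ) (hε : ε ≤ 1 / 4)
    (hJanti : ∀ i j : Fin ℓ, i < j → ¬ J.Adj i j → ∀ a ∈ A i, ∀ b ∈ A j, ¬ G.Adj a b)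
    (hJdense : ∀ i j : Fin ℓ, i < j → J.Adj i j →
      ∀ v ∈ A j, (chiS G (A i \ G.neighborSet v) : ℝ) < ε * (chiS G (A i) : ℝ)) :
    P5Free J := by
  have hdense : ∀ i j : Fin ℓ, i < j → J.Adj i j →
      ∀ v ∈ A j, 4 * chiS G (A i \ G.neighborSet v) < chiS G (A i) := by
    intro i j hij hJ v hv
    have hlt := hJdense i j hij hJ v hv
    have hχ : (0 : ℝ) ≤ chiS G (A i) := Nat.cast_nonneg _
    exact_mod_cast (show (4 * chiS G (A i \ G.neighborSet v) : ℝ) < chiS G (A i) by nlinarith)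
  exact ⟨fun f => hP5.false
    (nonempty_embedding_of_blockade (n := 4) (by simp) hne hdisj hJanti hdense f).some⟩
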